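/- Let b̂ minimize f(b) = l(b) + Σ_{i=1}^p λ_i |b|_{(i)} with l convex and differentiable, λ_1 ≥ ... ≥ λ_p ≥ 0, r = #{i : b̂_i ≠ 0}, and fix a > 0. Define T(a) = U(b̂) + a·b̂ where U(b) = −∇l(b). Then b̂_i ≠ 0 if and only if |T_i(a)| > λ_r. -/

import Mathlib

/-- The `i`-th largest absolute value of the coordinates of `b : Fin p → ℝ`
(0-indexed). -/
noncomputable def sortedAbs {p : ℕ} (b : Fin p → ℝ) (i : Fin p) : ℝ :=
  |b (Tuple.sort (fun j => |b j|) i.rev)|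

/-- `|b|₍ᵢ₎` with 1-based indexing `i ∈ {1,…,p}` (and `0` outside this range). -/
noncomputable def sAbs {p : ℕ} (b : Fin p → ℝ) (i : ℕ) : ℝ :=
  if h : 1 ≤ i ∧ i ≤ p then sortedAbs b ⟨i - 1, by omega⟩ else 0

/-!
Moving `b̂ᵢ` along its coordinate line changes the sorted-`ℓ₁` penalty `J_λ` in a controlled way.
If `b̂ᵢ = 0`, a small new entry `t` ranks behind the `r` nonzero entries, so `J_λ` grows by at most
`λ_r t`; if `b̂ᵢ ≠ 0`, shrinking it by `t` keeps it among the top `r` entries, so `J_λ` drops by at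
least `λ_r t`. Both bounds come from the rearrangement inequality, i.e. from
`J_λ(b) = max_π ∑ₖ λ_{π k} |bₖ|`. Minimality of `b̂` then gives `|Uᵢ| ≤ λ_r` in the first case and
`sign(b̂ᵢ) Uᵢ ≥ λ_r` in the second, where adding `a b̂ᵢ` makes the inequality strict.
-/

open Finset Filter Topology

theorem abs_le_of_forall_mul_le {x c : ℝ} (h : ∀ u, u * x ≤ c * |u|) : |x| ≤ c := by
  have h1 := h 1
  have h2 := h (-1)
  simp only [abs_neg, abs_one, mul_one, neg_one_mul, one_mul] at h1 h2
  exact abs_le.2 ⟨by linarith, h1⟩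

theorem lt_abs_add_mul_of_mul_abs_le {x y a c : ℝ} (ha : 0 < a) (hy : y ≠ 0)
    (h : c * |y| ≤ y * x) : c < |x + a * y| := by
  have hy' : 0 < |y| := abs_pos.2 hy
  refine lt_of_mul_lt_mul_left ?_ hy'.le
  calc |y| * c ≤ y * x := by linarith
    _ < y * x + a * |y| ^ 2 := lt_add_of_pos_right _ (by positivity)
    _ = y * (x + a * y) := by rw [sq_abs]; ring
    _ ≤ |y| * |x + a * y| := by rw [← abs_mul]; exact le_abs_self _

theorem add_smul_single_eq_update {ι R : Type*} [DecidableEq ι] [Semiring R] (b : ι → R) (i : ι)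
    (t u : R) : b + t • Pi.single i u = Function.update b i (b i + t * u) := by
  ext j
  by_cases hj : j = i
  · subst hj; simp
  · simp [hj]

theorem neg_le_fderiv_apply_of_forall_add_le {E : Type*} [NormedAddCommGroup E] [NormedSpace ℝ E]
    {f g : E → ℝ} {x w : E} {c : ℝ} (hf : DifferentiableAt ℝ f x)
    (hmin : ∀ y, f x + g x ≤ f y + g y)
    (hg : ∀ᶠ t in 𝓝[>] (0 : ℝ), g (x + t • w) ≤ g x + c * t) :
    -c ≤ fderiv ℝ f x w := by
  have hline : HasDerivAt (fun t : ℝ => f (x + t • w)) (fderiv ℝ f x w) 0 := by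
    have hf' : HasFDerivAt f (fderiv ℝ f x) (x + (0 : ℝ) • w) := by simpa using hf.hasFDerivAt
    simpa [Function.comp_def] using
      hf'.comp_hasDerivAt (0 : ℝ) (((hasDerivAt_id 0).smul_const w).const_add x)
  refine ge_of_tendsto ((hasDerivAt_iff_tendsto_slope.mp hline).mono_left
    (nhdsWithin_mono 0 fun t (ht : t ∈ Set.Ioi 0) =>
      Set.mem_compl_singleton_iff.mpr (ne_of_gt ht))) ?_
  filter_upwards [hg, self_mem_nhdsWithin] with t hgt (ht : 0 < t)
  have := hmin (x + t • w)
  rw [slope_def_field, le_div_iff₀ (by simpa using ht), zero_smul, add_zero]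
  linarith

section SortedL1

variable {p : ℕ}

/-- The position of `|b i|` in the decreasing rearrangement of `|b|` (0-indexed). -/
noncomputable def absRank (b : Fin p → ℝ) : Equiv.Perm (Fin p) :=
  (Fin.revPerm.trans (Tuple.sort fun j => |b j|)).symm

/-- The sorted-`ℓ₁` (SLOPE) penalty `J_λ(b) = ∑ᵢ λᵢ |b|₍ᵢ₎`. -/
noncomputable def slopeNorm (lam : ℕ → ℝ) (b : Fin p → ℝ) : ℝ :=
  ∑ i ∈ Icc 1 p, lam i * sAbs b i

theorem sortedAbs_antitone (b : Fin p → ℝ) : Antitone (sortedAbs b) := fun _ _ h => by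
  simpa [sortedAbs] using Tuple.monotone_sort (fun j => |b j|) (Fin.rev_le_rev.mpr h)

theorem sortedAbs_absRank (b : Fin p → ℝ) (i : Fin p) : sortedAbs b (absRank b i) = |b i| := by
  simp [sortedAbs, absRank]

theorem abs_le_abs_of_absRank_le {b : Fin p → ℝ} {i j : Fin p} (h : absRank b j ≤ absRank b i) :
    |b i| ≤ |b j| := by
  simpa only [sortedAbs_absRank] using sortedAbs_antitone b h

theorem card_abs_lt_le_absRank (b : Fin p → ℝ) (i : Fin p) :
    #{j | |b i| < |b j|} ≤ absRank b i := by
  calc #{j | |b i| < |b j|} ≤ #{j | absRank b j < absRank b i} :=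
        card_le_card fun j => by
          simpa using fun h => lt_of_not_ge fun h' => (abs_le_abs_of_absRank_le h').not_gt h
    _ = #((Iio (absRank b i)).map (absRank b).symm.toEmbedding) := by
        congr 1; ext j; simp
    _ = absRank b i := by rw [card_map, Fin.card_Iio]

theorem absRank_lt_card_support {b : Fin p → ℝ} {i : Fin p} (hi : b i ≠ 0) :
    (absRank b i : ℕ) < #{j | b j ≠ 0} := by
  calc (absRank b i : ℕ) < #((Iic (absRank b i)).map (absRank b).symm.toEmbedding) := by
        rw [card_map, Fin.card_Iic]; omega
    _ ≤ #{j | b j ≠ 0} := card_le_card fun j hj => by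
        obtain ⟨k, hk, rfl⟩ := mem_map.mp hj
        have hle : |b i| ≤ |b ((absRank b).symm k)| :=
          abs_le_abs_of_absRank_le (by simpa using mem_Iic.mp hk)
        simpa [← abs_pos] using (abs_pos.mpr hi).trans_le hle

theorem slopeNorm_eq_sum_sortedAbs (lam : ℕ → ℝ) (b : Fin p → ℝ) :
    slopeNorm lam b = ∑ k : Fin p, lam (k + 1) * sortedAbs b k := by
  have hsAbs : ∀ k : Fin p, sAbs b (k + 1) = sortedAbs b k := fun k => by
    simp [sAbs, Nat.succ_le_of_lt k.isLt]
  simp only [← hsAbs]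
  rw [Fin.sum_univ_eq_sum_range (fun k => lam (k + 1) * sAbs b (k + 1)), range_eq_Ico,
    sum_Ico_add' (fun i => lam i * sAbs b i), Ico_add_one_right_eq_Icc, zero_add, slopeNorm]

theorem slopeNorm_eq_sum_absRank (lam : ℕ → ℝ) (b : Fin p → ℝ) :
    slopeNorm lam b = ∑ k, lam (absRank b k + 1) * |b k| := by
  rw [slopeNorm_eq_sum_sortedAbs, ← Equiv.sum_comp (absRank b)]
  simp only [sortedAbs_absRank]

section Monotone

variable {lam : ℕ → ℝ} (hmono : ∀ i j, 1 ≤ i → i ≤ j → j ≤ p → lam j ≤ lam i)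
include hmono

/-- The rearrangement inequality: the decreasing arrangement maximizes the weighted sum. -/
theorem sum_mul_abs_le_slopeNorm (b : Fin p → ℝ) (π : Equiv.Perm (Fin p)) :
    ∑ k, lam (π k + 1) * |b k| ≤ slopeNorm lam b := by
  have hlam : Antitone fun k : Fin p => lam (k + 1) := fun k k' h =>
    hmono _ _ (by omega) (by simpa using h) (by omega)
  rw [slopeNorm_eq_sum_sortedAbs, ← Equiv.sum_comp (absRank b).symm]
  simpa only [← sortedAbs_absRank, Equiv.apply_symm_apply, Equiv.coe_trans, Function.comp_apply,
    smul_eq_mul] using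
    (hlam.monovary (sortedAbs_antitone b)).sum_comp_perm_smul_le_sum_smul
      (σ := (absRank b).symm.trans π)

theorem slopeNorm_update_le (b : Fin p → ℝ) (i : Fin p) (c : ℝ) :
    slopeNorm lam (Function.update b i c)
      ≤ slopeNorm lam b + lam (absRank (Function.update b i c) i + 1) * (|c| - |b i|) := by
  set π := absRank (Function.update b i c)
  have hsplit (x : Fin p → ℝ) : ∑ k, lam (π k + 1) * |x k|
      = lam (π i + 1) * |x i| + ∑ k ∈ univ.erase i, lam (π k + 1) * |x k| :=
    (add_sum_erase _ _ (mem_univ i)).symm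
  have hrest : ∑ k ∈ univ.erase i, lam (π k + 1) * |Function.update b i c k|
      = ∑ k ∈ univ.erase i, lam (π k + 1) * |b k| :=
    sum_congr rfl fun k hk => by rw [Function.update_of_ne (ne_of_mem_erase hk)]
  have hle := sum_mul_abs_le_slopeNorm hmono b π
  rw [slopeNorm_eq_sum_absRank, hsplit, hrest, Function.update_self]
  rw [hsplit] at hle
  linarith

theorem slopeNorm_update_le_of_eq_zero {b : Fin p → ℝ} {i : Fin p} (hbi : b i = 0)
    (hsupp : 1 ≤ #{j | b j ≠ 0}) {c : ℝ} (hc : ∀ j, b j ≠ 0 → |c| < |b j|) :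
    slopeNorm lam (Function.update b i c) ≤ slopeNorm lam b + lam #{j | b j ≠ 0} * |c| := by
  set b' := Function.update b i c
  have hrank : #{j | b j ≠ 0} ≤ absRank b' i := by
    refine (card_le_card fun j hj => ?_).trans (card_abs_lt_le_absRank b' i)
    have hj : b j ≠ 0 := (mem_filter.mp hj).2
    have hji : j ≠ i := by rintro rfl; exact hj hbi
    simpa [b', Function.update_of_ne hji] using hc j hj
  have hlam : lam (absRank b' i + 1) ≤ lam #{j | b j ≠ 0} :=
    hmono _ _ hsupp (by omega) (by omega)
  have hle := slopeNorm_update_le hmono b i c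
  rw [hbi, abs_zero, sub_zero] at hle
  exact hle.trans (by gcongr)

theorem slopeNorm_update_le_of_ne_zero {b : Fin p → ℝ} {i : Fin p} {c : ℝ} (hc0 : c ≠ 0)
    (hc : |c| ≤ |b i|) :
    slopeNorm lam (Function.update b i c)
      ≤ slopeNorm lam b - lam #{j | b j ≠ 0} * (|b i| - |c|) := by
  set b' := Function.update b i c
  have hbi : b i ≠ 0 := abs_pos.mp ((abs_pos.mpr hc0).trans_le hc)
  have hsupp : #{j | b' j ≠ 0} = #{j | b j ≠ 0} := by
    congr 1; ext j; by_cases hj : j = i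
    · subst hj; simp [b', hc0, hbi]
    · simp [b', Function.update_of_ne hj]
  have hrank := absRank_lt_card_support (b := b') (i := i) (by simpa [b'] using hc0)
  rw [hsupp] at hrank
  have hlam : lam #{j | b j ≠ 0} ≤ lam (absRank b' i + 1) :=
    hmono _ _ (by omega) (by omega) (by simpa using card_le_univ (s := {j | b j ≠ 0}))
  have hle := slopeNorm_update_le hmono b i c
  have : lam #{j | b j ≠ 0} * (|b i| - |c|) ≤ lam (absRank b' i + 1) * (|b i| - |c|) := by
    gcongr
  linarith

theorem eventually_slopeNorm_add_smul_single_le {b : Fin p → ℝ} {i : Fin p} (hbi : b i = 0)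
    (hsupp : 1 ≤ #{j | b j ≠ 0}) (u : ℝ) :
    ∀ᶠ t in 𝓝[>] 0, slopeNorm lam (b + t • Pi.single i u)
      ≤ slopeNorm lam b + lam #{j | b j ≠ 0} * |u| * t := by
  have hsmall : ∀ᶠ t in 𝓝[>] (0 : ℝ), ∀ j, b j ≠ 0 → |t * u| < |b j| := by
    refine eventually_all.2 fun j => ?_
    by_cases hj : b j = 0
    · exact .of_forall fun _ h => absurd hj h
    · have hlim : Tendsto (fun t : ℝ => |t * u|) (𝓝[>] 0) (𝓝 0) :=
        ((continuous_id.mul continuous_const).abs.tendsto' 0 0 (by simp)).mono_left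
          nhdsWithin_le_nhds
      filter_upwards [hlim.eventually_lt tendsto_const_nhds (abs_pos.2 hj)] with t ht _ using ht
  filter_upwards [hsmall, self_mem_nhdsWithin] with t ht (htpos : 0 < t)
  rw [add_smul_single_eq_update, hbi, zero_add]
  have hle := slopeNorm_update_le_of_eq_zero hmono hbi hsupp ht
  rw [abs_mul, abs_of_pos htpos] at hle
  exact hle.trans_eq (by ring)

theorem eventually_slopeNorm_shrink_le {b : Fin p → ℝ} {i : Fin p} (hbi : b i ≠ 0) :
    ∀ᶠ t in 𝓝[>] 0, slopeNorm lam (b + t • Pi.single i (-b i))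
      ≤ slopeNorm lam b + -(lam #{j | b j ≠ 0} * |b i|) * t := by
  filter_upwards [Ioo_mem_nhdsGT one_pos] with t ⟨ht0, ht1⟩
  have hc : b i + t * -b i = (1 - t) * b i := by ring
  have hc_abs : |(1 - t) * b i| = (1 - t) * |b i| := by rw [abs_mul, abs_of_pos (by linarith)]
  have hle := slopeNorm_update_le_of_ne_zero hmono (b := b) (i := i)
    (mul_ne_zero (sub_pos.2 ht1).ne' hbi) (by rw [hc_abs]; nlinarith [abs_pos.2 hbi])
  rw [add_smul_single_eq_update, hc]
  rw [hc_abs] at hle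
  linarith

end Monotone

end SortedL1

theorem slope_support_characterization_general {p : ℕ} (l : (Fin p → ℝ) → ℝ)
    (hdiff : Differentiable ℝ l)
    (lam : ℕ → ℝ)
    (hmono : ∀ i j, 1 ≤ i → i ≤ j → j ≤ p → lam j ≤ lam i)
    (bhat : Fin p → ℝ)
    (hmin : ∀ b, l bhat + ∑ i ∈ Finset.Icc 1 p, lam i * sAbs bhat i ≤
                 l b + ∑ i ∈ Finset.Icc 1 p, lam i * sAbs b i)
    (r : ℕ) (hr : r = (Finset.univ.filter (fun i => bhat i ≠ 0)).card)
    (hr1 : 1 ≤ r)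
    (U : Fin p → ℝ) (hU : ∀ i, U i = -(fderiv ℝ l bhat (Pi.single i 1)))
    (a : ℝ) (ha : 0 < a) (T : Fin p → ℝ) (hT : ∀ i, T i = U i + a * bhat i)
    (i : Fin p) :
    bhat i ≠ 0 ↔ lam r < |T i| := by
  subst hr
  have hderiv (u : ℝ) : fderiv ℝ l bhat (Pi.single i u) = -(u * U i) := by
    rw [← mul_one u, ← smul_eq_mul, Pi.single_smul', map_smul, smul_eq_mul, hU]
    ring
  by_cases hbi : bhat i = 0
  · refine iff_of_false (not_not.2 hbi) (not_lt.2 ?_)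
    rw [hT, hbi, mul_zero, add_zero]
    refine abs_le_of_forall_mul_le fun u => ?_
    have := neg_le_fderiv_apply_of_forall_add_le (hdiff bhat) hmin
      (eventually_slopeNorm_add_smul_single_le hmono hbi hr1 u)
    linarith [hderiv u]
  · refine iff_of_true hbi ?_
    rw [hT]
    refine lt_abs_add_mul_of_mul_abs_le ha hbi ?_
    have := neg_le_fderiv_apply_of_forall_add_le (hdiff bhat) hmin
      (eventually_slopeNorm_shrink_le hmono hbi)
    linarith [hderiv (-bhat i)]

/-- at a minimizer `b̂` of `l(b) + ∑ λᵢ |b|₍ᵢ₎` with `r ≥ 1`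
nonzero entries, for `a > 0` and `T(a) = U(b̂) + a b̂` (`U(b) = -∇l(b)`) one has
`b̂ᵢ ≠ 0 ↔ |Tᵢ(a)| > λ_r`. -/
theorem slope_support_characterization {p : ℕ} (l : (Fin p → ℝ) → ℝ)
    (hconv : ConvexOn ℝ Set.univ l) (hdiff : Differentiable ℝ l)
    (lam : ℕ → ℝ)
    (hmono : ∀ i j, 1 ≤ i → i ≤ j → j ≤ p → lam j ≤ lam i)
    (hnonneg : ∀ i, 1 ≤ i → i ≤ p → 0 ≤ lam i)
    (bhat : Fin p → ℝ)
    (hmin : ∀ b, l bhat + ∑ i ∈ Finset.Icc 1 p, lam i * sAbs bhat i ≤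
                 l b + ∑ i ∈ Finset.Icc 1 p, lam i * sAbs b i)
    (r : ℕ) (hr : r = (Finset.univ.filter (fun i => bhat i ≠ 0)).card)
    (hr1 : 1 ≤ r)
    (U : Fin p → ℝ) (hU : ∀ i, U i = -(fderiv ℝ l bhat (Pi.single i 1)))
    (a : ℝ) (ha : 0 < a) (T : Fin p → ℝ) (hT : ∀ i, T i = U i + a * bhat i)
    (i : Fin p) :
    bhat i ≠ 0 ↔ lam r < |T i| :=
  slope_support_characterization_general l hdiff lam hmono bhat hmin r hr hr1 U hU a ha T hT i
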